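/- Let p > 0, let r̂ : ℝ → [0,p] be bounded and measurable, and let c ∈ [0, p] be such that E[r̂ ∥ v_i] ≥ p − v_i for all v_i ≥ c (every buyer has nonnegative expected payoff). Then the expected profit is bounded by Π₁^H: ∫_c^∞ (p − E[r̂ ∥ v_i])·φ((θ−v_i)/σ)/σ dv_i ≤ p·Φ((θ−p)/σ) + ∫_0^p x·φ((θ−x)/σ)/σ dx = p·Φ((θ−p)/σ) + θ·(Φ(θ/σ) − Φ((θ−p)/σ)) + σ·(φ(θ/σ) − φ((θ−p)/σ)). -/

import Mathlib

noncomputable section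

open MeasureTheory Real Set Filter
open Topology

/-- standard normal pdf φ -/
def stdPdf (x : ℝ) : ℝ := (Real.sqrt (2 * Real.pi))⁻¹ * Real.exp (-(x ^ 2) / 2)

/-- standard normal cdf Φ -/
def stdCdf (x : ℝ) : ℝ := ∫ t in Set.Iic x, stdPdf t

lemma stdPdf_nonneg (x : ℝ) : 0 ≤ stdPdf x := by unfold stdPdf; positivity

@[fun_prop] lemma continuous_stdPdf : Continuous stdPdf := by unfold stdPdf; fun_prop

lemma stdPdf_eq : stdPdf = fun x => (Real.sqrt (2 * Real.pi))⁻¹ * Real.exp (-(2⁻¹ : ℝ) * x ^ 2) := by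
  funext x; unfold stdPdf; ring_nf

lemma integrable_stdPdf : Integrable stdPdf := by
  rw [stdPdf_eq]
  exact (integrable_exp_neg_mul_sq (by norm_num)).const_mul _

lemma integral_stdPdf : ∫ x, stdPdf x = 1 := by
  rw [stdPdf_eq, integral_const_mul, integral_gaussian]
  rw [show (Real.pi / 2⁻¹) = 2 * Real.pi by ring]
  have h : (0:ℝ) < Real.sqrt (2 * Real.pi) := Real.sqrt_pos.mpr (by positivity)
  exact inv_mul_cancel₀ h.ne'

lemma integrable_kernel (μ s : ℝ) (hs : 0 < s) :
    Integrable (fun v => stdPdf ((v - μ) / s) / s) := by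
  have hb : (0:ℝ) < 1 / (2 * s ^ 2) := by positivity
  have h2 : Integrable (fun v : ℝ => Real.exp (-(1 / (2 * s ^ 2)) * (v - μ) ^ 2)) :=
    (integrable_exp_neg_mul_sq hb).comp_sub_right μ
  refine (h2.const_mul ((Real.sqrt (2 * Real.pi))⁻¹ / s)).congr ?_
  filter_upwards with v
  unfold stdPdf
  rw [show (-(((v - μ) / s) ^ 2) / 2) = -(1 / (2 * s ^ 2)) * (v - μ) ^ 2 by
    field_simp]
  ring

lemma integral_kernel (μ s : ℝ) (hs : 0 < s) :
    ∫ v, stdPdf ((v - μ) / s) / s = 1 := by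
  have h1 : ∫ v : ℝ, stdPdf ((v - μ) / s) / s = ∫ v : ℝ, stdPdf (v / s) / s :=
    integral_sub_right_eq_self (fun v => stdPdf (v / s) / s) μ
  rw [h1, integral_div, Measure.integral_comp_div stdPdf s, integral_stdPdf,
    abs_of_pos hs, smul_eq_mul, mul_one, div_self hs.ne']

lemma stdCdf_sub (a b : ℝ) : stdCdf b - stdCdf a = ∫ x in a..b, stdPdf x := by
  unfold stdCdf
  exact intervalIntegral.integral_Iic_sub_Iic
    integrable_stdPdf.integrableOn integrable_stdPdf.integrableOn

lemma hasDerivAt_stdCdf (x : ℝ) : HasDerivAt stdCdf (stdPdf x) x := by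
  have heq : stdCdf = fun y => stdCdf 0 + ∫ t in (0:ℝ)..y, stdPdf t := by
    funext y
    rw [← stdCdf_sub 0 y]; ring
  rw [heq]
  exact (intervalIntegral.integral_hasDerivAt_right
    (continuous_stdPdf.intervalIntegrable 0 x)
    (continuous_stdPdf.stronglyMeasurableAtFilter volume (𝓝 x))
    continuous_stdPdf.continuousAt).const_add (stdCdf 0)

lemma tendsto_stdCdf_atBot : Tendsto stdCdf atBot (𝓝 0) := by
  have h := intervalIntegral_tendsto_integral_Iic (0:ℝ)
    integrable_stdPdf.integrableOn tendsto_id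
  have heq : stdCdf = fun y => stdCdf 0 - ∫ t in y..(0:ℝ), stdPdf t := by
    funext y
    rw [← stdCdf_sub y 0]; ring
  rw [heq]
  have h2 := h.const_sub (stdCdf 0)
  simpa [stdCdf] using h2

lemma stdPdf_reflect (a b : ℝ) : stdPdf (-(a / b)) = stdPdf (a / b) := by
  unfold stdPdf; ring_nf

lemma integrable_gauss (θ σ : ℝ) (hσ : 0 < σ) :
    Integrable (fun v => stdPdf ((θ - v) / σ) / σ) := by
  refine (integrable_kernel θ σ hσ).congr ?_
  filter_upwards with v
  rw [show (θ - v) / σ = -((v - θ)/σ) by ring, stdPdf_reflect]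

lemma hasDerivAt_stdPdf (x : ℝ) : HasDerivAt stdPdf (-x * stdPdf x) x := by
  unfold stdPdf
  have h1 : HasDerivAt (fun y : ℝ => -(y ^ 2) / 2) (-x) x := by
    have := ((hasDerivAt_pow 2 x).neg).div_const 2
    refine this.congr_deriv ?_
    norm_num; ring
  have h2 := h1.exp.const_mul (Real.sqrt (2 * Real.pi))⁻¹
  refine h2.congr_deriv ?_
  ring

lemma integral_Ioi_gauss (θ σ : ℝ) (hσ : 0 < σ) (a : ℝ) :
    ∫ v in Set.Ioi a, stdPdf ((θ - v) / σ) / σ = stdCdf ((θ - a) / σ) := by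
  have haff : ∀ x : ℝ, HasDerivAt (fun v : ℝ => (θ - v) / σ) (-1 / σ) x := by
    intro x
    simpa using ((hasDerivAt_const x θ).sub (hasDerivAt_id x)).div_const σ
  have hderiv : ∀ x ∈ Set.Ici a,
      HasDerivAt (fun v => -stdCdf ((θ - v) / σ)) (stdPdf ((θ - x) / σ) / σ) x := by
    intro x _
    have h2 := ((hasDerivAt_stdCdf ((θ - x) / σ)).comp x (haff x)).neg
    refine h2.congr_deriv ?_
    ring
  have htend : Tendsto (fun v => -stdCdf ((θ - v) / σ)) atTop (𝓝 0) := by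
    have h1 : Tendsto (fun v : ℝ => (θ - v) / σ) atTop atBot := by
      apply Filter.Tendsto.atBot_div_const hσ
      have := tendsto_atBot_add_const_left atTop θ (tendsto_neg_atTop_atBot (G := ℝ))
      refine this.congr fun v => ?_
      ring
    have := (tendsto_stdCdf_atBot.comp h1).neg
    simpa using this
  have h := integral_Ioi_of_hasDerivAt_of_tendsto' hderiv
    (integrable_gauss θ σ hσ).integrableOn htend
  rw [h]; ring

/-- posterior expected reward  E[r ‖ x] = ∫ r(v) φ((v-μ_x)/σ_v)/σ_v dv, where
    μ_x = τ x + (1-τ) θ, τ = σθ²/(σε²+σθ²), σ_v = σε σθ / √(σε²+σθ²). -/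
def postReward (θ σε σθ : ℝ) (r : ℝ → ℝ) (x : ℝ) : ℝ :=
  ∫ v, r v * stdPdf ((v - (σθ ^ 2 / (σε ^ 2 + σθ ^ 2) * x +
      (1 - σθ ^ 2 / (σε ^ 2 + σθ ^ 2)) * θ)) / (σε * σθ / Real.sqrt (σε ^ 2 + σθ ^ 2))) /
    (σε * σθ / Real.sqrt (σε ^ 2 + σθ ^ 2))

lemma postReward_mem (θ σε σθ : ℝ) (hσε : 0 < σε) (hσθ : 0 < σθ)
    (p : ℝ) (hp : 0 ≤ p) (r : ℝ → ℝ) (hmeas : Measurable r)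
    (hrange : ∀ v, r v ∈ Set.Icc 0 p) (x : ℝ) :
    postReward θ σε σθ r x ∈ Set.Icc 0 p := by
  unfold postReward
  set s := σε * σθ / Real.sqrt (σε ^ 2 + σθ ^ 2) with hsdef
  have hsq : (0:ℝ) < σε ^ 2 + σθ ^ 2 := by positivity
  have hs0 : 0 < s := by
    rw [hsdef]
    have := Real.sqrt_pos.mpr hsq
    positivity
  set μx := σθ ^ 2 / (σε ^ 2 + σθ ^ 2) * x + (1 - σθ ^ 2 / (σε ^ 2 + σθ ^ 2)) * θ with hμ
  have hker := integrable_kernel μx s hs0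
  have hri : Integrable (fun v => r v * (stdPdf ((v - μx) / s) / s)) :=
    hker.bdd_mul hmeas.aestronglyMeasurable (c := p) (Filter.Eventually.of_forall fun v => by
      rw [Real.norm_eq_abs, abs_of_nonneg (hrange v).1]; exact (hrange v).2)
  have heq : (fun v => r v * stdPdf ((v - μx) / s) / s)
      = fun v => r v * (stdPdf ((v - μx) / s) / s) := by
    funext v; ring
  constructor
  · rw [heq]
    exact integral_nonneg fun v => mul_nonneg (hrange v).1 (div_nonneg (stdPdf_nonneg _) hs0.le)
  · rw [heq]
    calc (∫ v, r v * (stdPdf ((v - μx) / s) / s))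
        ≤ ∫ v, p * (stdPdf ((v - μx) / s) / s) := by
          refine integral_mono hri (hker.const_mul p) fun v => ?_
          exact mul_le_mul_of_nonneg_right (hrange v).2
            (div_nonneg (stdPdf_nonneg _) hs0.le)
      _ = p := by rw [integral_const_mul, integral_kernel μx s hs0, mul_one]

/-- expected profit  Π(p, r, c) = ∫ (p - r(v)) Φ((v-c)/σε) φ((θ-v)/σθ)/σθ dv. -/
def profit (θ σε σθ : ℝ) (p : ℝ) (r : ℝ → ℝ) (c : ℝ) : ℝ :=
  ∫ v, (p - r v) * stdCdf ((v - c) / σε) * stdPdf ((θ - v) / σθ) / σθ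

/-- the upper bound Π₁^H on the expected profit: when every buyer (vᵢ ≥ c)
    has nonnegative expected payoff, the expected profit is at most
    p·Φ((θ-p)/σ) + ∫₀^p x·φ((θ-x)/σ)/σ dx, which equals the stated closed form. -/
theorem stmt_19 (θ σε σθ : ℝ) (hσε : 0 < σε) (hσθ : 0 < σθ)
    (σ : ℝ) (hσ : σ = Real.sqrt (σε ^ 2 + σθ ^ 2))
    (p : ℝ) (hp : 0 < p)
    (r : ℝ → ℝ) (hmeas : Measurable r) (hrange : ∀ v, r v ∈ Set.Icc 0 p)
    (c : ℝ) (hc : c ∈ Set.Icc 0 p)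
    (hbuy : ∀ vi, c ≤ vi → p - vi ≤ postReward θ σε σθ r vi) :
    (∫ vi in Set.Ioi c,
        (p - postReward θ σε σθ r vi) * stdPdf ((θ - vi) / σ) / σ) ≤
      p * stdCdf ((θ - p) / σ) + ∫ x in (0 : ℝ)..p, x * stdPdf ((θ - x) / σ) / σ ∧
    p * stdCdf ((θ - p) / σ) + (∫ x in (0 : ℝ)..p, x * stdPdf ((θ - x) / σ) / σ) =
      p * stdCdf ((θ - p) / σ) + θ * (stdCdf (θ / σ) - stdCdf ((θ - p) / σ)) +
        σ * (stdPdf (θ / σ) - stdPdf ((θ - p) / σ)) := by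
  have hσ0 : 0 < σ := by
    rw [hσ]; exact Real.sqrt_pos.mpr (by positivity)
  constructor
  · -- inequality
    have hpost : ∀ x, postReward θ σε σθ r x ∈ Set.Icc 0 p :=
      postReward_mem θ σε σθ hσε hσθ p hp.le r hmeas hrange
    have hgauss := integrable_gauss θ σ hσ0
    set g : ℝ → ℝ := fun v => min v p * (stdPdf ((θ - v) / σ) / σ) with hg
    have hgon : ∀ a : ℝ, 0 ≤ a → IntegrableOn g (Set.Ioi a) := by
      intro a ha
      refine Integrable.mono' ((hgauss.const_mul p).integrableOn)
        ((Continuous.aestronglyMeasurable (by fun_prop)).restrict) ?_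
      rw [ae_restrict_iff' measurableSet_Ioi]
      filter_upwards with v hv
      have hv0 : 0 ≤ v := ha.trans (le_of_lt hv)
      rw [Real.norm_eq_abs, abs_of_nonneg
        (mul_nonneg (le_min hv0 hp.le) (div_nonneg (stdPdf_nonneg _) hσ0.le))]
      exact mul_le_mul_of_nonneg_right (min_le_right v p)
        (div_nonneg (stdPdf_nonneg _) hσ0.le)
    have step1 : (∫ vi in Set.Ioi c,
        (p - postReward θ σε σθ r vi) * stdPdf ((θ - vi) / σ) / σ)
        ≤ ∫ v in Set.Ioi c, g v := by
      refine integral_mono_of_nonneg ?_ (hgon c hc.1) ?_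
      · filter_upwards [ae_restrict_mem measurableSet_Ioi] with v hv
        have := (hpost v).2
        have h1 : 0 ≤ p - postReward θ σε σθ r v := by linarith
        exact div_nonneg (mul_nonneg h1 (stdPdf_nonneg _)) hσ0.le
      · filter_upwards [ae_restrict_mem measurableSet_Ioi] with v hv
        have h1 : p - postReward θ σε σθ r v ≤ min v p := by
          refine le_min ?_ ?_
          · have := hbuy v (le_of_lt hv); linarith
          · have := (hpost v).1; linarith
        rw [mul_div_assoc]
        exact mul_le_mul_of_nonneg_right h1 (div_nonneg (stdPdf_nonneg _) hσ0.le)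
    have step2 : (∫ v in Set.Ioi c, g v) ≤ ∫ v in Set.Ioi 0, g v := by
      refine setIntegral_mono_set (hgon 0 le_rfl) ?_
        (HasSubset.Subset.eventuallyLE (Set.Ioi_subset_Ioi hc.1))
      filter_upwards [ae_restrict_mem measurableSet_Ioi] with v hv
      exact mul_nonneg (le_min (le_of_lt hv) hp.le)
        (div_nonneg (stdPdf_nonneg _) hσ0.le)
    have hsplit : (∫ v in Set.Ioi 0, g v)
        = (∫ v in Set.Ioc 0 p, g v) + ∫ v in Set.Ioi p, g v := by
      rw [← Set.Ioc_union_Ioi_eq_Ioi hp.le]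
      exact setIntegral_union Set.Ioc_disjoint_Ioi_same measurableSet_Ioi
        ((hgon 0 le_rfl).mono_set Set.Ioc_subset_Ioi_self) (hgon p hp.le)
    have h1 : (∫ v in Set.Ioc 0 p, g v)
        = ∫ x in (0:ℝ)..p, x * stdPdf ((θ - x) / σ) / σ := by
      rw [intervalIntegral.integral_of_le hp.le]
      refine setIntegral_congr_fun measurableSet_Ioc fun v hv => ?_
      rw [hg]
      dsimp only
      rw [min_eq_left hv.2, mul_div_assoc]
    have h2 : (∫ v in Set.Ioi p, g v) = p * stdCdf ((θ - p) / σ) := by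
      have heq : ∀ v ∈ Set.Ioi p, g v = p * (stdPdf ((θ - v) / σ) / σ) := by
        intro v hv
        rw [hg]; dsimp only; rw [min_eq_right (le_of_lt hv)]
      rw [setIntegral_congr_fun measurableSet_Ioi heq, integral_const_mul,
        integral_Ioi_gauss θ σ hσ0 p]
    linarith
  · -- equality
    have haff : ∀ x : ℝ, HasDerivAt (fun v : ℝ => (θ - v) / σ) (-1 / σ) x := by
      intro x
      simpa using ((hasDerivAt_const x θ).sub (hasDerivAt_id x)).div_const σ
    have hF : ∀ x ∈ Set.uIcc (0:ℝ) p,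
        HasDerivAt (fun y => -θ * stdCdf ((θ - y) / σ) - σ * stdPdf ((θ - y) / σ))
          (x * stdPdf ((θ - x) / σ) / σ) x := by
      intro x _
      have hcdf := ((hasDerivAt_stdCdf ((θ - x) / σ)).comp x (haff x)).const_mul (-θ)
      have hpdf := ((hasDerivAt_stdPdf ((θ - x) / σ)).comp x (haff x)).const_mul σ
      have h := hcdf.sub hpdf
      refine h.congr_deriv ?_
      field_simp
      ring
    have hii : IntervalIntegrable (fun x => x * stdPdf ((θ - x) / σ) / σ) volume 0 p := by
      apply Continuous.intervalIntegrable
      fun_prop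
    rw [intervalIntegral.integral_eq_sub_of_hasDerivAt hF hii]
    simp only [sub_zero]
    ring
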